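/- arXiv:1603.02377 — 6 statements merged into one kernel-verified Lean document; each statement's English description precedes it below -/
import Mathlib

section
/- Let E ⊆ {0,1}^n be nonempty and finite with down-closure polytope P̂, and let x ∈ ℝ≥0^n with x_i ≤ 1 for all i. Define a zero-sum security game with defender rewards r and costs c where, for i with x_i = 0, set c_i = 1, r_i = 2, and for i with x_i > 0, set c_i = 0, r_i = 1/x_i. Then x ∈ P̂ if and only if there exists x* ∈ conv(E) with x*_i r_i + (1 − x*_i) c_i ≥ 1 for all i ∈ [n]. -/
/-- The set of sub pure strategies: all 0-1 vectors entrywise dominated by some element of `E`. -/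
def subClosure (n : ℕ) (E : Finset (Fin n → ℝ)) : Set (Fin n → ℝ) :=
  {f | (∀ i, f i = 0 ∨ f i = 1) ∧ ∃ e ∈ E, ∀ i, f i ≤ e i}

lemma subClosure_update_zero {n : ℕ} {E : Finset (Fin n → ℝ)}
    (h01 : ∀ e ∈ E, ∀ i, e i = 0 ∨ e i = 1)
    {f : Fin n → ℝ} (hf : f ∈ subClosure n E) (i : Fin n) :
    Function.update f i 0 ∈ subClosure n E := by
  obtain ⟨hf01, e, he, hle⟩ := hf
  refine ⟨fun j => ?_, e, he, fun j => ?_⟩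
  · rcases eq_or_ne j i with rfl | h
    · left; simp
    · simpa [Function.update_of_ne h] using hf01 j
  · rcases eq_or_ne j i with rfl | h
    · simp only [Function.update_self]
      rcases h01 e he j with h0 | h1
      · simp [h0]
      · simp [h1]
    · simpa [Function.update_of_ne h] using hle j

/-- Linear map scaling coordinate `i` by `s`. -/
def scaleCoord {n : ℕ} (i : Fin n) (s : ℝ) : (Fin n → ℝ) →ₗ[ℝ] (Fin n → ℝ) where
  toFun f := Function.update f i (s * f i)
  map_add' f g := by
    funext j
    rcases eq_or_ne j i with rfl | h <;>
      simp [Function.update_apply, mul_add, *]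
  map_smul' a f := by
    funext j
    rcases eq_or_ne j i with rfl | h <;>
      simp [Function.update_apply, mul_left_comm, *]

lemma updateLow_mem {n : ℕ} {E : Finset (Fin n → ℝ)}
    (h01 : ∀ e ∈ E, ∀ i, e i = 0 ∨ e i = 1)
    {z : Fin n → ℝ} (hz : z ∈ convexHull ℝ (subClosure n E))
    {i : Fin n} {t : ℝ} (ht0 : 0 ≤ t) (ht : t ≤ z i) :
    Function.update z i t ∈ convexHull ℝ (subClosure n E) := by
  rcases eq_or_lt_of_le (ht0.trans ht) with h0 | hpos
  · have : t = 0 := le_antisymm (ht.trans h0.ge) ht0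
    subst this
    have : Function.update z i 0 = z := by
      funext j
      rcases eq_or_ne j i with rfl | h
      · simp [Function.update_apply, ← h0]
      · simp [Function.update_apply, h]
    rwa [this]
  · set s : ℝ := t / z i with hs
    have hs0 : 0 ≤ s := div_nonneg ht0 hpos.le
    have hs1 : s ≤ 1 := (div_le_one hpos).2 ht
    have key : Function.update z i t = scaleCoord i s z := by
      funext j
      rcases eq_or_ne j i with rfl | h
      · simp [scaleCoord, hs, div_mul_cancel₀ _ hpos.ne']
      · simp [scaleCoord, Function.update_apply, h]
    rw [key]
    have himg : scaleCoord i s z ∈ (scaleCoord i s) '' (convexHull ℝ (subClosure n E)) :=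
      Set.mem_image_of_mem _ hz
    rw [(scaleCoord i s).image_convexHull] at himg
    refine convexHull_min ?_ (convex_convexHull ℝ _) himg
    rintro _ ⟨f, hf, rfl⟩
    have hf0 := hf
    obtain ⟨hf01, -⟩ := hf
    have hTf : (scaleCoord i s) f = s • f + (1 - s) • Function.update f i 0 := by
      funext j
      rcases eq_or_ne j i with rfl | h
      · simp [scaleCoord, Function.update_apply]
      · simp [scaleCoord, Function.update_apply, h]; ring
    rw [hTf]
    exact (convex_convexHull ℝ _) (subset_convexHull ℝ _ hf0)
      (subset_convexHull ℝ _ (subClosure_update_zero h01 hf0 i)) hs0 (by linarith) (by ring)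

lemma down_mem {n : ℕ} {E : Finset (Fin n → ℝ)}
    (h01 : ∀ e ∈ E, ∀ i, e i = 0 ∨ e i = 1)
    (s : Finset (Fin n)) :
    ∀ x y : Fin n → ℝ, y ∈ convexHull ℝ (subClosure n E) → (∀ i, 0 ≤ x i) →
      (∀ i, x i ≤ y i) → (∀ i ∉ s, x i = y i) →
      x ∈ convexHull ℝ (subClosure n E) := by
  induction s using Finset.induction_on with
  | empty =>
    intro x y hy _ _ hout
    have : x = y := funext fun i => hout i (by simp)
    rwa [this]
  | @insert i s hi ih =>
    intro x y hy h0 hle hout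
    set z := Function.update x i (y i) with hz
    have hzy : z ∈ convexHull ℝ (subClosure n E) := by
      refine ih z y hy (fun j => ?_) (fun j => ?_) (fun j hj => ?_)
      · rcases eq_or_ne j i with rfl | h
        · simpa [hz] using (h0 j).trans (hle j)
        · simpa [hz, Function.update_apply, h] using h0 j
      · rcases eq_or_ne j i with rfl | h
        · simp [hz]
        · simpa [hz, Function.update_apply, h] using hle j
      · rcases eq_or_ne j i with rfl | h
        · simp [hz]
        · have : j ∉ insert i s := by simp [h, hj]
          simpa [hz, Function.update_apply, h] using hout j this
    have hx : x = Function.update z i (x i) := by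
      funext j
      rcases eq_or_ne j i with rfl | h
      · simp [hz, Function.update_apply]
      · simp [hz, Function.update_apply, h]
    rw [hx]
    exact updateLow_mem h01 hzy (h0 i) (by simp [hz, hle i])

/-- Membership in the relaxed polytope `P̂` is equivalent to the constructed
zero-sum security game having value at least 1: `x ∈ P̂` iff there are feasible marginals
`x* ∈ conv(E)` with `x*_i r_i + (1 - x*_i) c_i ≥ 1` for all `i`, where `c_i = 1, r_i = 2`
when `x_i = 0` and `c_i = 0, r_i = 1/x_i` when `x_i > 0`. -/
theorem membership_iff_gameValue_ge_one
    (n : ℕ) (E : Finset (Fin n → ℝ)) (hE : E.Nonempty)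
    (h01 : ∀ e ∈ E, ∀ i, e i = 0 ∨ e i = 1)
    (x : Fin n → ℝ) (hx0 : ∀ i, 0 ≤ x i) (hx1 : ∀ i, x i ≤ 1)
    (r c : Fin n → ℝ)
    (hr : ∀ i, r i = if x i = 0 then 2 else 1 / x i)
    (hc : ∀ i, c i = if x i = 0 then 1 else 0) :
    x ∈ convexHull ℝ (subClosure n E) ↔
      ∃ xs ∈ convexHull ℝ (E : Set (Fin n → ℝ)),
        ∀ i, 1 ≤ xs i * r i + (1 - xs i) * c i := by
  constructor
  · intro hx
    rw [convexHull_eq] at hx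
    obtain ⟨ι, t, w, z, hw0, hw1, hzs, hcm⟩ := hx
    -- choose dominating elements of E
    have hsel : ∀ j ∈ t, ∃ e ∈ E, ∀ i, z j i ≤ e i := fun j hj => (hzs j hj).2
    classical
    choose! e he hle using hsel
    set xs := t.centerMass w e with hxs
    have hxsE : xs ∈ convexHull ℝ (E : Set (Fin n → ℝ)) :=
      t.centerMass_mem_convexHull hw0 (by rw [hw1]; norm_num) he
    have hdom : ∀ i, x i ≤ xs i := by
      intro i
      have h1 : x i = ∑ j ∈ t, w j * z j i := by
        rw [← hcm, Finset.centerMass, hw1]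
        simp [Finset.sum_apply]
      have h2 : xs i = ∑ j ∈ t, w j * e j i := by
        rw [hxs, Finset.centerMass, hw1]
        simp [Finset.sum_apply]
      rw [h1, h2]
      exact Finset.sum_le_sum fun j hj =>
        mul_le_mul_of_nonneg_left (hle j hj i) (hw0 j hj)
    refine ⟨xs, hxsE, fun i => ?_⟩
    rw [hr i, hc i]
    by_cases h : x i = 0
    · simp only [h, if_true]
      have : 0 ≤ xs i := (hx0 i).trans (hdom i)
      nlinarith [hdom i, hx0 i]
    · simp only [h, if_false]
      have hpos : 0 < x i := lt_of_le_of_ne (hx0 i) (Ne.symm h)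
      have : x i ≤ xs i := hdom i
      rw [mul_zero, add_zero, one_div]
      have h2 : (1:ℝ) ≤ xs i / x i := (one_le_div hpos).2 (hdom i)
      rwa [div_eq_mul_inv] at h2
  · rintro ⟨xs, hxsE, hineq⟩
    have hxsE' : xs ∈ convexHull ℝ (subClosure n E) := by
      refine convexHull_mono ?_ hxsE
      intro e he
      exact ⟨h01 e he, e, he, fun i => le_refl _⟩
    have hdom : ∀ i, x i ≤ xs i := by
      intro i
      have := hineq i
      rw [hr i, hc i] at this
      by_cases h : x i = 0
      · rw [h]
        simp only [h, if_true] at this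
        nlinarith
      · simp only [h, if_false] at this
        have hpos : 0 < x i := lt_of_le_of_ne (hx0 i) (Ne.symm h)
        rw [mul_zero, add_zero, one_div] at this
        have := (one_le_div hpos).1 (by rwa [div_eq_mul_inv])
        linarith
    exact down_mem h01 Finset.univ x xs hxsE' hx0 hdom (fun i hi => absurd (Finset.mem_univ i) hi)
end

section
/- Let E ⊆ {0,1}^n be nonempty and finite, w ∈ ℝ≥0^n, and let ε > 0 satisfy ε·n < δ, where δ > 0 is a lower bound on the minimum positive gap |e·w − e'·w| over e, e' ∈ Ê with e·w ≠ e'·w (e.g., δ = 2^{-q} when w has bit complexity q). Then any maximizer of the regularized objective e·w + ε(e·1) over Ê that lies in E is also a maximizer of e·w over E; moreover, every vertex maximizer of the regularized objective over P̂ is a maximal element of Ê, hence lies in E. -/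
/-- With `ε·n < δ` for `δ` a lower bound on the minimum positive gap of the
`w`-objective over `Ê`, any maximizer `e*` of the regularized objective
`w·e + ε(1·e)` over `Ê` is a maximal element of `Ê` (not strictly entrywise dominated),
hence lies in `E`, and it also maximizes `w·e` over `E`. -/
theorem regularized_maximizer_is_feasible_and_optimal
    (n : ℕ) (E : Finset (Fin n → ℝ)) (hE : E.Nonempty)
    (h01 : ∀ e ∈ E, ∀ i, e i = 0 ∨ e i = 1)
    (w : Fin n → ℝ) (hw : ∀ i, 0 ≤ w i)
    (δ ε : ℝ) (hδ : 0 < δ) (hε : 0 < ε) (hεn : ε * n < δ)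
    (hgap : ∀ e ∈ subClosure n E, ∀ e' ∈ subClosure n E,
      (∑ i, w i * e i) ≠ (∑ i, w i * e' i) →
      δ ≤ |(∑ i, w i * e i) - (∑ i, w i * e' i)|)
    (estar : Fin n → ℝ) (hstar : estar ∈ subClosure n E)
    (hmax : ∀ e ∈ subClosure n E,
      (∑ i, w i * e i) + ε * (∑ i, e i) ≤ (∑ i, w i * estar i) + ε * (∑ i, estar i)) :
    (¬ ∃ e ∈ subClosure n E, (∀ i, estar i ≤ e i) ∧ estar ≠ e) ∧
      estar ∈ E ∧ ∀ e ∈ E, ∑ i, w i * e i ≤ ∑ i, w i * estar i := by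
  obtain ⟨hstar01, e₀, he₀E, he₀dom⟩ := hstar
  have hstar' : estar ∈ subClosure n E := ⟨hstar01, e₀, he₀E, he₀dom⟩
  -- Part 1: no strict domination
  have part1 : ¬ ∃ e ∈ subClosure n E, (∀ i, estar i ≤ e i) ∧ estar ≠ e := by
    rintro ⟨e, heMem, hdom, hne⟩

    have hj : ∃ j, estar j < e j := by
      by_contra h
      push_neg at h
      exact hne (funext fun i => le_antisymm (hdom i) (h i))
    obtain ⟨j, hj⟩ := hj
    have hsum : (∑ i, estar i) < ∑ i, e i :=
      Finset.sum_lt_sum (fun i _ => hdom i) ⟨j, Finset.mem_univ j, hj⟩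
    have hwsum : (∑ i, w i * estar i) ≤ ∑ i, w i * e i :=
      Finset.sum_le_sum fun i _ => mul_le_mul_of_nonneg_left (hdom i) (hw i)
    have := hmax e heMem
    nlinarith
  refine ⟨part1, ?_, ?_⟩
  · -- Part 2: estar ∈ E
    have : estar = e₀ := by
      by_contra hne
      exact part1 ⟨e₀, ⟨h01 e₀ he₀E, e₀, he₀E, fun i => le_refl _⟩, he₀dom, hne⟩
    rw [this]; exact he₀E
  · -- Part 3: optimality over E
    intro e heE
    by_contra hlt
    push_neg at hlt
    have heMem : e ∈ subClosure n E := ⟨h01 e heE, e, heE, fun i => le_refl _⟩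
    have hgapd : δ ≤ (∑ i, w i * e i) - (∑ i, w i * estar i) := by
      have := hgap e heMem estar hstar' (by linarith)
      rwa [abs_of_pos (by linarith)] at this
    have hmaxe := hmax e heMem
    have hse : 0 ≤ ∑ i, e i :=
      Finset.sum_nonneg fun i _ => by rcases h01 e heE i with h | h <;> simp [h]
    have hss : (∑ i, estar i) ≤ n := by
      calc (∑ i, estar i) ≤ ∑ _i : Fin n, (1 : ℝ) :=
            Finset.sum_le_sum fun i _ => by rcases hstar01 i with h | h <;> simp [h]
        _ = n := by simp
    nlinarith
end

section
/- In any security game, the attacker derives the same utility in every Nash equilibrium: if (x, y) and (x', y') are Nash equilibria, then U^a(x, y) = U^a(x', y'). -/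
/-- The probability simplex in `ℝ^n`. -/
def simplexSet (n : ℕ) : Set (Fin n → ℝ) := {y | (∀ i, 0 ≤ y i) ∧ ∑ i, y i = 1}

/-- Defender expected utility in a security game. -/
def Ud {n : ℕ} (r c x y : Fin n → ℝ) : ℝ := ∑ i, y i * (r i * x i + c i * (1 - x i))

/-- Attacker expected utility in a security game. -/
def Ua {n : ℕ} (rho zeta x y : Fin n → ℝ) : ℝ :=
  ∑ i, y i * (rho i * (1 - x i) + zeta i * x i)

/-- `(x, y)` is a Nash equilibrium of the security game with pure strategies `E`
and payoffs `(r, c, rho, zeta)`. -/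
def IsNE {n : ℕ} (E : Finset (Fin n → ℝ)) (r c rho zeta x y : Fin n → ℝ) : Prop :=
  x ∈ convexHull ℝ (E : Set (Fin n → ℝ)) ∧ y ∈ simplexSet n ∧
    (∀ x' ∈ convexHull ℝ (E : Set (Fin n → ℝ)), Ud r c x' y ≤ Ud r c x y) ∧
    (∀ y' ∈ simplexSet n, Ua rho zeta x y' ≤ Ua rho zeta x y)

lemma ne_ua_le (n : ℕ) (E : Finset (Fin n → ℝ))
    (r c rho zeta : Fin n → ℝ)
    (hrc : ∀ i, c i < r i) (hrz : ∀ i, zeta i < rho i)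
    (x y x' y' : Fin n → ℝ)
    (h1 : IsNE E r c rho zeta x y) (h2 : IsNE E r c rho zeta x' y') :
    Ua rho zeta x y ≤ Ua rho zeta x' y' := by
  obtain ⟨hx, ⟨hy0, hy1⟩, hdef, hatt⟩ := h1
  obtain ⟨hx', hy', hdef', hatt'⟩ := h2
  set w : Fin n → ℝ := fun i => (r i - c i) / (rho i - zeta i) with hw_def
  have hw : ∀ i, 0 < w i := fun i => div_pos (by linarith [hrc i]) (by linarith [hrz i])
  set S : ℝ := ∑ i, y i * w i with hS_def
  have hjj : ∃ j, 0 < y j := by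
    by_contra h
    push_neg at h
    have hz : ∀ i, y i = 0 := fun i => le_antisymm (h i) (hy0 i)
    simp [hz] at hy1
  obtain ⟨j, hj⟩ := hjj
  have hS : 0 < S := by
    have : y j * w j ≤ S := by
      apply Finset.single_le_sum (f := fun i => y i * w i)
      · intro i _
        exact mul_nonneg (hy0 i) (hw i).le
      · exact Finset.mem_univ j
    nlinarith [hw j]
  set f : Fin n → ℝ := fun i => y i * w i / S with hf_def
  have hfsimp : f ∈ simplexSet n := by
    constructor
    · intro i
      exact div_nonneg (mul_nonneg (hy0 i) (hw i).le) hS.le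
    · rw [← Finset.sum_div]
      field_simp
      exact hS_def.symm
  set a : Fin n → ℝ := fun i => rho i * (1 - x i) + zeta i * x i with ha_def
  set U : ℝ := Ua rho zeta x y with hU_def
  have hai : ∀ i, a i ≤ U := by
    intro i
    have hmem : (Pi.single i 1 : Fin n → ℝ) ∈ simplexSet n := by
      constructor
      · intro k
        rcases eq_or_ne k i with rfl | h
        · simp
        · simp [Pi.single_apply, h]
      · simp [Pi.single_apply]
    have := hatt _ hmem
    have heq : Ua rho zeta x (Pi.single i 1) = a i := by
      simp [Ua, Pi.single_apply, ite_mul]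
      rfl
    rw [heq] at this
    exact this
  have hsum0 : ∑ i, y i * (a i - U) = 0 := by
    have : ∑ i, y i * (a i - U) = (∑ i, y i * a i) - (∑ i, y i) * U := by
      rw [Finset.sum_mul]
      rw [← Finset.sum_sub_distrib]
      congr 1; ext i; ring
    rw [this, hy1, hU_def]
    simp [Ua, ha_def]
  have hzero : ∀ i, y i * (a i - U) = 0 := by
    intro i
    have := (Finset.sum_eq_zero_iff_of_nonpos (fun i _ =>
      mul_nonpos_of_nonneg_of_nonpos (hy0 i) (by linarith [hai i]))).mp hsum0
    exact this i (Finset.mem_univ i)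
  have hUaf : Ua rho zeta x f = U := by
    have : ∀ i, f i * a i = f i * U := by
      intro i
      have : f i * (a i - U) = (w i / S) * (y i * (a i - U)) := by
        simp only [hf_def]; ring
      rw [hzero i] at this
      simp only [mul_zero] at this
      nlinarith [this]
    calc Ua rho zeta x f = ∑ i, f i * a i := by simp [Ua, ha_def]
      _ = ∑ i, f i * U := by exact Finset.sum_congr rfl (fun i _ => this i)
      _ = (∑ i, f i) * U := by rw [Finset.sum_mul]
      _ = U := by rw [hfsimp.2, one_mul]
  have key : ∀ z : Fin n → ℝ, Ua rho zeta z f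
      = (∑ i, f i * rho i) - (Ud r c z y - ∑ i, y i * c i) / S := by
    intro z
    have hper : ∀ i, f i * (rho i * (1 - z i) + zeta i * z i)
        = f i * rho i - (y i * (r i * z i + c i * (1 - z i)) - y i * c i) / S := by
      intro i
      have hne : rho i - zeta i ≠ 0 := by linarith [hrz i]
      simp only [hf_def, hw_def]
      field_simp
      ring
    simp only [Ua, Ud]
    calc ∑ i, f i * (rho i * (1 - z i) + zeta i * z i)
        = ∑ i, (f i * rho i - (y i * (r i * z i + c i * (1 - z i)) - y i * c i) / S) :=
          Finset.sum_congr rfl (fun i _ => hper i)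
      _ = _ := by
          rw [Finset.sum_sub_distrib, ← Finset.sum_div, Finset.sum_sub_distrib]
  have step1 : Ua rho zeta x f ≤ Ua rho zeta x' f := by
    rw [key x, key x']
    have := hdef x' hx'
    have hSle : (Ud r c x' y - ∑ i, y i * c i) / S ≤ (Ud r c x y - ∑ i, y i * c i) / S :=
      (div_le_div_iff_of_pos_right hS).mpr (by linarith)
    linarith
  calc U = Ua rho zeta x f := hUaf.symm
    _ ≤ Ua rho zeta x' f := step1
    _ ≤ Ua rho zeta x' y' := hatt' f hfsimp


/-- In any security game, the attacker derives the same utility in every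
Nash equilibrium. -/
theorem attacker_utility_same_in_all_NE
    (n : ℕ) (E : Finset (Fin n → ℝ)) (hE : E.Nonempty)
    (h01 : ∀ e ∈ E, ∀ i, e i = 0 ∨ e i = 1)
    (r c rho zeta : Fin n → ℝ)
    (hrc : ∀ i, c i < r i) (hrz : ∀ i, zeta i < rho i)
    (x y x' y' : Fin n → ℝ)
    (h1 : IsNE E r c rho zeta x y) (h2 : IsNE E r c rho zeta x' y') :
    Ua rho zeta x y = Ua rho zeta x' y' := by
  exact le_antisymm
    (ne_ua_le n E r c rho zeta hrc hrz x y x' y' h1 h2)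
    (ne_ua_le n E r c rho zeta hrc hrz x' y' x y h2 h1)
end

section
/- In any security game, Nash equilibria are interchangeable: if (x, y) and (x', y') are Nash equilibria, so are (x, y') and (x', y). -/
/- ---------- auxiliary material ---------- -/

private lemma sum_ptwise_eq {n : ℕ} {g h : Fin n → ℝ}
    (hle : ∀ i, g i ≤ h i) (hsum : ∑ i, h i ≤ ∑ i, g i) : ∀ i, g i = h i := by
  have hz : ∑ i, (h i - g i) = 0 := by
    rw [Finset.sum_sub_distrib]
    have := Finset.sum_le_sum (fun i (_ : i ∈ Finset.univ) => hle i)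
    linarith
  intro i
  have := (Finset.sum_eq_zero_iff_of_nonneg
      (fun i (_ : i ∈ Finset.univ) => sub_nonneg.2 (hle i))).1 hz i (Finset.mem_univ i)
  linarith

private lemma Ua_eq' {n : ℕ} (rho zeta z u : Fin n → ℝ) :
    Ua rho zeta z u = ∑ i, u i * (rho i - (rho i - zeta i) * z i) := by
  unfold Ua; exact Finset.sum_congr rfl fun i _ => by ring

private lemma Ud_eq' {n : ℕ} (r c z u : Fin n → ℝ) :
    Ud r c z u = (∑ i, u i * c i) + ∑ i, u i * (r i - c i) * z i := by
  unfold Ud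
  rw [← Finset.sum_add_distrib]
  exact Finset.sum_congr rfl fun i _ => by ring

private lemma NE_half
    (n : ℕ) (E : Finset (Fin n → ℝ))
    (r c rho zeta : Fin n → ℝ)
    (hrc : ∀ i, c i < r i) (hrz : ∀ i, zeta i < rho i)
    (x y x' y' : Fin n → ℝ)
    (h1 : IsNE E r c rho zeta x y) (h2 : IsNE E r c rho zeta x' y') :
    IsNE E r c rho zeta x y' := by
  obtain ⟨hx, hy, hD1, hA1⟩ := h1
  obtain ⟨hx', hy', hD2, hA2⟩ := h2
  have hb : ∀ i, (0:ℝ) < rho i - zeta i := fun i => sub_pos.2 (hrz i)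
  have hd : ∀ i, (0:ℝ) < r i - c i := fun i => sub_pos.2 (hrc i)
  set V : ℝ := Ua rho zeta x y with hV
  set V' : ℝ := Ua rho zeta x' y' with hV'
  set A : Fin n → ℝ := fun i => rho i - (rho i - zeta i) * x i with hAdef
  set A' : Fin n → ℝ := fun i => rho i - (rho i - zeta i) * x' i with hA'def
  set w : Fin n → ℝ := fun i => y i * (r i - c i) / (rho i - zeta i) with hwdef
  set w' : Fin n → ℝ := fun i => y' i * (r i - c i) / (rho i - zeta i) with hw'def
  -- pure strategies are in the simplex
  have hpure : ∀ k : Fin n, (fun i => if i = k then (1:ℝ) else 0) ∈ simplexSet n := by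
    intro k
    constructor
    · intro i; dsimp only; split <;> norm_num
    · simp
  have hpureUa : ∀ (z : Fin n → ℝ) (k : Fin n),
      Ua rho zeta z (fun i => if i = k then (1:ℝ) else 0)
        = rho k - (rho k - zeta k) * z k := by
    intro z k
    rw [Ua_eq']
    rw [Finset.sum_eq_single k]
    · simp
    · intro b _ hbk; simp [hbk]
    · intro h; exact absurd (Finset.mem_univ k) h
  have hAk : ∀ k, A k ≤ V := by
    intro k
    have := hA1 _ (hpure k)
    rwa [hpureUa x k] at this
  have hA'k : ∀ k, A' k ≤ V' := by
    intro k
    have := hA2 _ (hpure k)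
    rwa [hpureUa x' k] at this
  -- V as a sum
  have hVy : V = ∑ i, y i * A i := Ua_eq' rho zeta x y
  have hV'y' : V' = ∑ i, y' i * A' i := Ua_eq' rho zeta x' y'
  have hsum1 : ∑ i, y i * V = V := by rw [← Finset.sum_mul, hy.2, one_mul]
  have hsum1' : ∑ i, y' i * V' = V' := by rw [← Finset.sum_mul, hy'.2, one_mul]
  -- nonnegativity / positivity of weights
  have hw0 : ∀ i, 0 ≤ w i := fun i =>
    div_nonneg (mul_nonneg (hy.1 i) (hd i).le) (hb i).le
  have hw'0 : ∀ i, 0 ≤ w' i := fun i =>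
    div_nonneg (mul_nonneg (hy'.1 i) (hd i).le) (hb i).le
  have hwb : ∀ i, w i * (rho i - zeta i) = y i * (r i - c i) := fun i =>
    div_mul_cancel₀ _ (hb i).ne'
  have hw'b : ∀ i, w' i * (rho i - zeta i) = y' i * (r i - c i) := fun i =>
    div_mul_cancel₀ _ (hb i).ne'
  have hex : ∃ j, 0 < y j := by
    by_contra h
    push_neg at h
    have h0 : ∑ i, y i = 0 := Finset.sum_eq_zero (fun i _ => le_antisymm (h i) (hy.1 i))
    rw [hy.2] at h0; norm_num at h0
  have hex' : ∃ j, 0 < y' j := by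
    by_contra h
    push_neg at h
    have h0 : ∑ i, y' i = 0 := Finset.sum_eq_zero (fun i _ => le_antisymm (h i) (hy'.1 i))
    rw [hy'.2] at h0; norm_num at h0
  set lam : ℝ := ∑ i, w i with hlam
  set lam' : ℝ := ∑ i, w' i with hlam'
  have hlampos : 0 < lam := by
    obtain ⟨j, hj⟩ := hex
    exact Finset.sum_pos' (fun i _ => hw0 i)
      ⟨j, Finset.mem_univ j, div_pos (mul_pos hj (hd j)) (hb j)⟩
  have hlam'pos : 0 < lam' := by
    obtain ⟨j, hj⟩ := hex'
    exact Finset.sum_pos' (fun i _ => hw'0 i)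
      ⟨j, Finset.mem_univ j, div_pos (mul_pos hj (hd j)) (hb j)⟩
  -- decomposition of the transformed payoff
  have hdec : ∀ z : Fin n → ℝ, ∑ i, w i * (rho i - (rho i - zeta i) * z i)
      = (∑ i, w i * rho i) - ∑ i, y i * (r i - c i) * z i := by
    intro z
    rw [← Finset.sum_sub_distrib]
    refine Finset.sum_congr rfl fun i _ => ?_
    linear_combination (-(z i)) * hwb i
  have hdec' : ∀ z : Fin n → ℝ, ∑ i, w' i * (rho i - (rho i - zeta i) * z i)
      = (∑ i, w' i * rho i) - ∑ i, y' i * (r i - c i) * z i := by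
    intro z
    rw [← Finset.sum_sub_distrib]
    refine Finset.sum_congr rfl fun i _ => ?_
    linear_combination (-(z i)) * hw'b i
  -- support conditions at the own equilibrium
  have hyA : ∀ i, y i * A i = y i * V := by
    refine sum_ptwise_eq (fun i => mul_le_mul_of_nonneg_left (hAk i) (hy.1 i)) ?_
    rw [hsum1, hVy]
  have hy'A' : ∀ i, y' i * A' i = y' i * V' := by
    refine sum_ptwise_eq (fun i => mul_le_mul_of_nonneg_left (hA'k i) (hy'.1 i)) ?_
    rw [hsum1', hV'y']
  have hAV : ∀ i, 0 < y i → A i = V := fun i hi => mul_left_cancel₀ hi.ne' (hyA i)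
  have hA'V' : ∀ i, 0 < y' i → A' i = V' := fun i hi => mul_left_cancel₀ hi.ne' (hy'A' i)
  -- e1 : ∑ w A = lam * V
  have e1 : ∑ i, w i * A i = lam * V := by
    rw [hlam, Finset.sum_mul]
    refine Finset.sum_congr rfl fun i _ => ?_
    rcases (hy.1 i).eq_or_lt with h | h
    · have hwi : w i = 0 := by rw [hwdef]; dsimp only; rw [← h]; ring
      rw [hwi]; ring
    · rw [hAV i h]
  have e2 : ∑ i, w' i * A' i = lam' * V' := by
    rw [hlam', Finset.sum_mul]
    refine Finset.sum_congr rfl fun i _ => ?_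
    rcases (hy'.1 i).eq_or_lt with h | h
    · have hwi : w' i = 0 := by rw [hw'def]; dsimp only; rw [← h]; ring
      rw [hwi]; ring
    · rw [hA'V' i h]
  -- i3 : ∑ w A' ≤ lam * V'
  have i3 : ∑ i, w i * A' i ≤ lam * V' := by
    rw [hlam, Finset.sum_mul]
    exact Finset.sum_le_sum fun i _ => mul_le_mul_of_nonneg_left (hA'k i) (hw0 i)
  have i4 : ∑ i, w' i * A i ≤ lam' * V := by
    rw [hlam', Finset.sum_mul]
    exact Finset.sum_le_sum fun i _ => mul_le_mul_of_nonneg_left (hAk i) (hw'0 i)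
  -- defender inequalities transformed
  have hd1 : ∑ i, y i * (r i - c i) * x' i ≤ ∑ i, y i * (r i - c i) * x i := by
    have := hD1 x' hx'
    rw [Ud_eq', Ud_eq'] at this
    linarith
  have hd2 : ∑ i, y' i * (r i - c i) * x i ≤ ∑ i, y' i * (r i - c i) * x' i := by
    have := hD2 x hx
    rw [Ud_eq', Ud_eq'] at this
    linarith
  -- ∑ w A ≤ ∑ w A'  (x minimizes the transformed payoff against w)
  have i1 : ∑ i, w i * A i ≤ ∑ i, w i * A' i := by
    rw [hAdef, hA'def, hdec x, hdec x']
    linarith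
  have i2 : ∑ i, w' i * A' i ≤ ∑ i, w' i * A i := by
    rw [hAdef, hA'def, hdec' x', hdec' x]
    linarith
  -- equal values
  have hVle : V ≤ V' := by
    have : lam * V ≤ lam * V' := by
      calc lam * V = ∑ i, w i * A i := e1.symm
        _ ≤ ∑ i, w i * A' i := i1
        _ ≤ lam * V' := i3
    exact le_of_mul_le_mul_left this hlampos
  have hV'le : V' ≤ V := by
    have : lam' * V' ≤ lam' * V := by
      calc lam' * V' = ∑ i, w' i * A' i := e2.symm
        _ ≤ ∑ i, w' i * A i := i2
        _ ≤ lam' * V := i4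
    exact le_of_mul_le_mul_left this hlam'pos
  have hVeq : V = V' := le_antisymm hVle hV'le
  -- the cross value is tight : ∑ w' A = lam' * V
  have hcross : ∑ i, w' i * A i = lam' * V := by
    refine le_antisymm i4 ?_
    calc lam' * V = lam' * V' := by rw [hVeq]
      _ = ∑ i, w' i * A' i := e2.symm
      _ ≤ ∑ i, w' i * A i := i2
  -- pointwise equality on the support of w'
  have hw'A : ∀ i, w' i * A i = w' i * V := by
    refine sum_ptwise_eq (fun i => mul_le_mul_of_nonneg_left (hAk i) (hw'0 i)) ?_
    rw [hcross, ← Finset.sum_mul, ← hlam']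
  have hy'AV : ∀ i, 0 < y' i → A i = V := by
    intro i hi
    have hwpos : 0 < w' i := div_pos (mul_pos hi (hd i)) (hb i)
    exact mul_left_cancel₀ hwpos.ne' (hw'A i)
  -- Ua rho zeta x y' = V
  have hUaxy' : Ua rho zeta x y' = V := by
    rw [Ua_eq']
    have : ∀ i, y' i * A i = y' i * V := by
      intro i
      rcases (hy'.1 i).eq_or_lt with h | h
      · rw [← h]; ring
      · rw [hy'AV i h]
    calc ∑ i, y' i * A i = ∑ i, y' i * V := Finset.sum_congr rfl fun i _ => this i
      _ = V := by rw [← Finset.sum_mul, hy'.2, one_mul]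
  -- the defender sums against y' coincide at x and x'
  have hdefeq : Ud r c x' y' ≤ Ud r c x y' := by
    have hseq : ∑ i, y' i * (r i - c i) * x i = ∑ i, y' i * (r i - c i) * x' i := by
      have h1' := hcross
      have h2' : ∑ i, w' i * A' i = lam' * V := by rw [e2, hVeq]
      rw [hAdef, hdec' x] at h1'
      rw [hA'def, hdec' x'] at h2'
      linarith
    rw [Ud_eq', Ud_eq', hseq]
  refine ⟨hx, hy', ?_, ?_⟩
  · intro x'' hx''
    exact le_trans (hD2 x'' hx'') hdefeq
  · intro y'' hy''
    rw [hUaxy', Ua_eq']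
    calc ∑ i, y'' i * A i ≤ ∑ i, y'' i * V :=
          Finset.sum_le_sum fun i _ => mul_le_mul_of_nonneg_left (hAk i) (hy''.1 i)
      _ = V := by rw [← Finset.sum_mul, hy''.2, one_mul]

/-- In any security game, Nash equilibria are interchangeable: if `(x, y)`
and `(x', y')` are Nash equilibria, then so are `(x, y')` and `(x', y)`. -/
theorem NE_interchangeable
    (n : ℕ) (E : Finset (Fin n → ℝ)) (hE : E.Nonempty)
    (h01 : ∀ e ∈ E, ∀ i, e i = 0 ∨ e i = 1)
    (r c rho zeta : Fin n → ℝ)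
    (hrc : ∀ i, c i < r i) (hrz : ∀ i, zeta i < rho i)
    (x y x' y' : Fin n → ℝ)
    (h1 : IsNE E r c rho zeta x y) (h2 : IsNE E r c rho zeta x' y') :
    IsNE E r c rho zeta x y' ∧ IsNE E r c rho zeta x' y :=
  ⟨NE_half n E r c rho zeta hrc hrz x y x' y' h1 h2,
   NE_half n E r c rho zeta hrc hrz x' y' x y h2 h1⟩
end

section
/- Restricted to attacker Nash equilibrium strategies, the defender's equilibrium utility is affine in y: if y is an attacker NE strategy of the security game G, then max_{e ∈ E} Σ_i e_i y_i (r_i − c_i) = λ(y)·V + Σ_i ((r_i − c_i)/(ρ_i − ζ_i)) ρ_i y_i, where λ(y) = Σ_i ((r_i − c_i)/(ρ_i − ζ_i)) y_i and V is the value of the associated zero-sum game Ḡ(−ζ, −ρ, ρ, ζ, E), a constant independent of y. -/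
/-- Restricted to attacker Nash equilibrium strategies `y`, the defender's
best-response value `max_{e ∈ E} Σ_i e_i y_i (r_i − c_i)` is affine in `y`:
it equals `λ(y)·V + Σ_i ((r_i − c_i)/(ρ_i − ζ_i)) ρ_i y_i` where
`λ(y) = Σ_i ((r_i − c_i)/(ρ_i − ζ_i)) y_i` and `V` is the value of the associated
zero-sum game `Ḡ(−ζ, −ρ, ρ, ζ, E)`, a constant independent of `y`. -/
theorem defender_NE_utility_affine
    (n : ℕ) (E : Finset (Fin n → ℝ)) (hE : E.Nonempty)
    (h01 : ∀ e ∈ E, ∀ i, e i = 0 ∨ e i = 1)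
    (r c rho zeta : Fin n → ℝ)
    (hrc : ∀ i, c i < r i) (hrz : ∀ i, zeta i < rho i)
    (V : ℝ)
    (hV : IsGreatest {v : ℝ | ∃ x ∈ convexHull ℝ (E : Set (Fin n → ℝ)),
        v = sInf {t : ℝ | ∃ i, t = -(zeta i) * x i - rho i * (1 - x i)}} V)
    (x y : Fin n → ℝ) (hNE : IsNE E r c rho zeta x y) :
    E.sup' hE (fun e => ∑ i, e i * y i * (r i - c i)) =
      (∑ i, ((r i - c i) / (rho i - zeta i)) * y i) * V +
        ∑ i, ((r i - c i) / (rho i - zeta i)) * rho i * y i := by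
  obtain ⟨hxE, ⟨hy0, hy1⟩, hBRd, hBRa⟩ := hNE
  -- basic positivity
  have hne : ∀ i, rho i - zeta i ≠ 0 := fun i => sub_ne_zero.2 (hrz i).ne'
  have hcoef : ∀ i, 0 < (r i - c i) / (rho i - zeta i) := fun i =>
    div_pos (sub_pos.2 (hrc i)) (sub_pos.2 (hrz i))
  set w : Fin n → ℝ := fun i => ((r i - c i) / (rho i - zeta i)) * y i with hw
  have hw0 : ∀ i, 0 ≤ w i := fun i => mul_nonneg (hcoef i).le (hy0 i)
  set lam : ℝ := ∑ i, ((r i - c i) / (rho i - zeta i)) * y i with hlam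
  -- n is positive: Fin n is nonempty
  have hn : Nonempty (Fin n) := by
    rcases Nat.eq_zero_or_pos n with h | h
    · subst h; simp at hy1
    · exact ⟨⟨0, h⟩⟩
  -- lam > 0
  have hlampos : 0 < lam := by
    have h1 : (0:ℝ) < ∑ i, y i := by rw [hy1]; norm_num
    have := Finset.exists_lt_of_sum_lt (f := fun _ : Fin n => (0:ℝ)) (g := y)
      (by simpa using h1)
    obtain ⟨i, -, hi⟩ := this
    have hwi : 0 < w i := mul_pos (hcoef i) hi
    have : w i ≤ lam := Finset.single_le_sum (fun j _ => hw0 j) (Finset.mem_univ i)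
    linarith
  -- attacker payoff per target
  set a : (Fin n → ℝ) → Fin n → ℝ := fun x' i => rho i * (1 - x' i) + zeta i * x' i with ha
  set A : ℝ := Ua rho zeta x y with hA
  -- each pure attack payoff is at most A
  have haA : ∀ j, a x j ≤ A := by
    intro j
    have hmem : (fun i => if i = j then (1:ℝ) else 0) ∈ simplexSet n := by
      constructor
      · intro i; by_cases h : i = j <;> simp [h]
      · simp
    have := hBRa _ hmem
    have heq : Ua rho zeta x (fun i => if i = j then (1:ℝ) else 0) = a x j := by
      simp [Ua, ha, Finset.sum_ite_eq', ite_mul]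
    rw [heq] at this; exact this
  -- complementary slackness: y i * a x i = y i * A
  have hcs : ∀ i, y i * a x i = y i * A := by
    have hsum : ∑ i, y i * (A - a x i) = 0 := by
      have : ∑ i, y i * a x i = A := by simp [hA, Ua, ha]
      have h2 : ∑ i, y i * (A - a x i) = (∑ i, y i) * A - ∑ i, y i * a x i := by
        rw [Finset.sum_mul, ← Finset.sum_sub_distrib]
        congr 1; ext i; ring
      rw [h2, hy1, this]; ring
    intro i
    have := (Finset.sum_eq_zero_iff_of_nonneg (fun i _ =>
      mul_nonneg (hy0 i) (sub_nonneg.2 (haA i)))).1 hsum i (Finset.mem_univ i)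
    nlinarith [this]
  -- the zero-sum utility u
  set u : (Fin n → ℝ) → Fin n → ℝ := fun x' i => -(zeta i) * x' i - rho i * (1 - x' i) with hu
  have hua : ∀ x' i, u x' i = -(a x' i) := by intro x' i; simp [hu, ha]; ring
  -- the linear objective
  set L : (Fin n → ℝ) →ₗ[ℝ] ℝ :=
    ∑ i, (y i * (r i - c i)) • (LinearMap.proj i : (Fin n → ℝ) →ₗ[ℝ] ℝ) with hL
  have hLval : ∀ x', L x' = ∑ i, y i * (r i - c i) * x' i := by
    intro x'; simp [hL, LinearMap.sum_apply]
  -- defender best response in terms of L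
  have hUd : ∀ x', Ud r c x' y = L x' + ∑ i, y i * c i := by
    intro x'
    rw [hLval, Ud, ← Finset.sum_add_distrib]
    congr 1; ext i; ring
  have hLBR : ∀ x' ∈ convexHull ℝ (E : Set (Fin n → ℝ)), L x' ≤ L x := by
    intro x' hx'
    have := hBRd x' hx'
    rw [hUd, hUd] at this; linarith
  -- key identity: sum of w_i * u x' i  = L x' - C
  set C : ℝ := ∑ i, ((r i - c i) / (rho i - zeta i)) * rho i * y i with hC
  have hg : ∀ x', ∑ i, w i * u x' i = L x' - C := by
    intro x'
    rw [hLval, hC, ← Finset.sum_sub_distrib]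
    congr 1; ext i
    have : (r i - c i) / (rho i - zeta i) * (rho i - zeta i) = r i - c i :=
      div_mul_cancel₀ _ (hne i)
    simp only [hw, hu]
    linear_combination (y i * x' i) * this
  -- the inner inf set is the range of u x'
  have hset : ∀ x', {t : ℝ | ∃ i, t = -(zeta i) * x' i - rho i * (1 - x' i)}
      = Set.range (u x') := by
    intro x'; ext t; simp [hu, eq_comm]
  -- -A ≤ V
  have hAV : -A ≤ V := by
    have h1 : sInf (Set.range (u x)) ≤ V := by
      have h0 := hV.2 ⟨x, hxE, rfl⟩
      rwa [hset x] at h0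
    have h2 : -A ≤ sInf (Set.range (u x)) := by
      apply le_csInf (Set.range_nonempty _)
      rintro t ⟨i, rfl⟩
      rw [hua]; linarith [haA i]
    linarith
  -- L x - C = lam * (-A)
  have hLx : L x - C = lam * (-A) := by
    rw [← hg x]
    rw [hlam, Finset.sum_mul]
    congr 1; ext i
    rw [hua]
    have h3 := hcs i
    simp only [hw]
    linear_combination (-((r i - c i) / (rho i - zeta i))) * h3
  -- lam * V ≤ L x - C
  have hge : lam * V ≤ L x - C := by
    obtain ⟨xs, hxsE, hVeq⟩ := hV.1
    rw [hset xs] at hVeq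
    have hVle : ∀ i, V ≤ u xs i := by
      intro i
      rw [hVeq]
      exact csInf_le ((Set.finite_range _).bddBelow) ⟨i, rfl⟩
    have h1 : lam * V ≤ ∑ i, w i * u xs i := by
      rw [hlam, Finset.sum_mul]
      apply Finset.sum_le_sum
      intro i _
      exact mul_le_mul_of_nonneg_left (hVle i) (hw0 i)
    have h2 : L xs ≤ L x := hLBR xs hxsE
    rw [hg xs] at h1; linarith
  -- hence L x = lam * V + C
  have hLxV : L x = lam * V + C := by
    have : lam * (-A) ≤ lam * V := mul_le_mul_of_nonneg_left hAV hlampos.le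
    linarith [hLx, hge]
  -- conclude about the sup'
  have hobj : ∀ e : Fin n → ℝ, (∑ i, e i * y i * (r i - c i)) = L e := by
    intro e; rw [hLval]; congr 1; ext i; ring
  apply le_antisymm
  · apply Finset.sup'_le
    intro e heE
    rw [hobj]
    have := hLBR e (subset_convexHull ℝ (E : Set (Fin n → ℝ)) heE)
    linarith [hLxV]
  · obtain ⟨e, heE, hle⟩ := (L.convexOn (convex_univ)).exists_ge_of_mem_convexHull
      (Set.subset_univ (E : Set (Fin n → ℝ))) hxE
    have h4 := Finset.le_sup' (f := fun e => ∑ i, e i * y i * (r i - c i)) heE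
    rw [hobj e] at h4
    calc lam * V + C = L x := hLxV.symm
    _ ≤ L e := hle
    _ ≤ E.sup' hE (fun e => ∑ i, e i * y i * (r i - c i)) := h4
end

section
/- Consider the zero-sum security game on the complete graph K_n where targets are edges, the defender chooses k < n vertices, covering all edges incident to a chosen vertex, defender utility is 1 if the attacked edge is covered and 0 otherwise. Then the uniform distribution over all k-subsets of vertices is a maximin strategy for the defender, and the value of the game is 1 − (n−k)(n−k−1)/(n(n−1)). -/
lemma nat_ident (n k : ℕ) (hn : 2 ≤ n) :
    Nat.choose (n-2) k * (n*(n-1)) = Nat.choose n k * ((n-k)*(n-k-1)) := by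
  obtain ⟨m, rfl⟩ : ∃ m, n = m + 2 := ⟨n - 2, by omega⟩
  have h1 := Nat.choose_mul_succ_eq (m+1) k
  have h2 := Nat.choose_mul_succ_eq m k
  have heq : (m+2) - k - 1 = (m+1) - k := by omega
  simp only [Nat.add_sub_cancel] at *
  calc Nat.choose m k * ((m+2)*(m+1))
      = (Nat.choose m k * (m+1)) * (m+2) := by ring
    _ = (Nat.choose (m+1) k * ((m+1)-k)) * (m+2) := by rw [h2]
    _ = (Nat.choose (m+1) k * (m+2)) * ((m+1)-k) := by ring
    _ = Nat.choose (m+2) k * ((m+2)-k) * ((m+1)-k) := by rw [h1]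
    _ = Nat.choose (m+2) k * (((m+2)-k)*((m+2)-k-1)) := by rw [heq]; ring

lemma countS (n k : ℕ) (S : Finset (Fin n)) (hS : S.card = k) (hk : k ≤ n) :
    ∑ p ∈ (Finset.univ : Finset (Fin n)).offDiag,
        (if p.1 ∈ S ∨ p.2 ∈ S then (1:ℝ) else 0)
      = (n:ℝ)*((n:ℝ)-1) - ((n:ℝ)-k)*((n:ℝ)-k-1) := by
  classical
  set T : Finset (Fin n) := Sᶜ with hT
  have hTcard : T.card = n - k := by simp [hT, Finset.card_compl, hS]
  have key : ∀ p : Fin n × Fin n,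
      (if p.1 ∈ S ∨ p.2 ∈ S then (1:ℝ) else 0)
        = 1 - (if p.1 ∈ T ∧ p.2 ∈ T then (1:ℝ) else 0) := by
    intro p
    by_cases h1 : p.1 ∈ S <;> by_cases h2 : p.2 ∈ S <;> simp [h1, h2, hT]
  rw [Finset.sum_congr rfl (fun p _ => key p), Finset.sum_sub_distrib]
  have hfilter : (Finset.univ : Finset (Fin n)).offDiag.filter
      (fun p => p.1 ∈ T ∧ p.2 ∈ T) = T.offDiag := by
    ext p
    simp [Finset.mem_offDiag, and_comm, and_assoc]
    tauto
  rw [Finset.sum_boole, hfilter, Finset.sum_const, Finset.offDiag_card,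
    Finset.offDiag_card, hTcard]
  simp only [Finset.card_univ, Fintype.card_fin, nsmul_eq_mul, mul_one]
  have c1 : ((n*n - n : ℕ) : ℝ) = (n:ℝ)*(n:ℝ) - n := by
    rw [Nat.cast_sub (by nlinarith)]; push_cast; ring
  have c2 : (((n-k)*(n-k) - (n-k) : ℕ) : ℝ) = ((n:ℝ)-k)*((n:ℝ)-k) - ((n:ℝ)-k) := by
    rw [Nat.cast_sub (by nlinarith), Nat.cast_mul, Nat.cast_sub hk]
    try push_cast
    try ring
  rw [c1, c2]; ring

/-- In the zero-sum security game on `K_n` where targets are edges and the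
defender uniformly randomizes over `k`-subsets of vertices (covering all incident edges),
every edge is covered with probability exactly `1 − (n−k)(n−k−1)/(n(n−1))`, and no mixed
strategy over `k`-subsets guarantees a larger minimum coverage probability: the uniform
distribution is maximin and this is the game value. -/
theorem uniform_is_maximin_on_complete_graph
    (n k : ℕ) (hn : 2 ≤ n) (hk : k < n) :
    (∀ u v : Fin n, u ≠ v →
        ∑ S ∈ (Finset.univ : Finset (Fin n)).powersetCard k,
            (((Finset.univ : Finset (Fin n)).powersetCard k).card : ℝ)⁻¹ *
              (if u ∈ S ∨ v ∈ S then (1 : ℝ) else 0) =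
          1 - ((n : ℝ) - k) * ((n : ℝ) - k - 1) / ((n : ℝ) * ((n : ℝ) - 1))) ∧
    (∀ p : Finset (Fin n) → ℝ,
        (∀ S ∈ (Finset.univ : Finset (Fin n)).powersetCard k, 0 ≤ p S) →
        (∑ S ∈ (Finset.univ : Finset (Fin n)).powersetCard k, p S = 1) →
        ∃ u v : Fin n, u ≠ v ∧
          ∑ S ∈ (Finset.univ : Finset (Fin n)).powersetCard k,
              p S * (if u ∈ S ∨ v ∈ S then (1 : ℝ) else 0) ≤
            1 - ((n : ℝ) - k) * ((n : ℝ) - k - 1) / ((n : ℝ) * ((n : ℝ) - 1))) := by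
  classical
  have hNn : ((Finset.univ : Finset (Fin n)).powersetCard k).card = Nat.choose n k := by
    rw [Finset.card_powersetCard, Finset.card_univ, Fintype.card_fin]
  have hNpos : 0 < Nat.choose n k := Nat.choose_pos hk.le
  have e2 : ((n-k:ℕ):ℝ) = (n:ℝ)-k := by rw [Nat.cast_sub hk.le]
  have e3 : ((n-k-1:ℕ):ℝ) = (n:ℝ)-k-1 := by
    have h' : n-k-1 = n-(k+1) := by omega
    rw [h', Nat.cast_sub (by omega)]; push_cast; ring
  have e1 : ((n-1:ℕ):ℝ) = (n:ℝ)-1 := by rw [Nat.cast_sub (by omega)]; norm_num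
  have key : (Nat.choose (n-2) k : ℝ) * ((n:ℝ)*((n:ℝ)-1))
      = (Nat.choose n k : ℝ) * (((n:ℝ)-k)*((n:ℝ)-k-1)) := by
    have h := nat_ident n k hn
    calc (Nat.choose (n-2) k : ℝ) * ((n:ℝ)*((n:ℝ)-1))
        = ((Nat.choose (n-2) k * (n*(n-1)) : ℕ) : ℝ) := by push_cast [e1]; ring
      _ = ((Nat.choose n k * ((n-k)*(n-k-1)) : ℕ) : ℝ) := by rw [h]
      _ = (Nat.choose n k : ℝ) * (((n:ℝ)-k)*((n:ℝ)-k-1)) := by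
          push_cast [e2, e3]; ring
  have hden : (n:ℝ)*((n:ℝ)-1) ≠ 0 := by
    have : (2:ℝ) ≤ n := by exact_mod_cast hn
    nlinarith
  constructor
  · intro u v huv
    rw [← Finset.mul_sum, Finset.sum_boole]
    have hfil : ((Finset.univ : Finset (Fin n)).powersetCard k).filter
        (fun S => ¬(u ∈ S ∨ v ∈ S)) = (({u, v} : Finset (Fin n))ᶜ).powersetCard k := by
      ext S
      simp only [Finset.mem_filter, Finset.mem_powersetCard, Finset.subset_univ, true_and,
        not_or, Finset.mem_compl, Finset.mem_insert, Finset.mem_singleton]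
      constructor
      · rintro ⟨hc, hu, hv⟩
        refine ⟨fun x hx => ?_, hc⟩
        simp only [Finset.mem_compl, Finset.mem_insert, Finset.mem_singleton]
        rintro (rfl | rfl) <;> tauto
      · rintro ⟨h, hc⟩
        refine ⟨hc, fun h' => ?_, fun h' => ?_⟩
        · have := h h'; simp at this
        · have := h h'; simp at this
    have hcompl : (({u, v} : Finset (Fin n))ᶜ).card = n - 2 := by
      rw [Finset.card_compl, Finset.card_insert_of_notMem (by simpa using huv),
        Finset.card_singleton, Fintype.card_fin]
    have hcard : (((Finset.univ : Finset (Fin n)).powersetCard k).filter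
        (fun S => u ∈ S ∨ v ∈ S)).card = Nat.choose n k - Nat.choose (n-2) k := by
      have hadd := Finset.card_filter_add_card_filter_not
        (s := (Finset.univ : Finset (Fin n)).powersetCard k)
        (p := fun S => u ∈ S ∨ v ∈ S)
      rw [hfil, Finset.card_powersetCard, hcompl, hNn] at hadd
      omega
    have hle : Nat.choose (n-2) k ≤ Nat.choose n k :=
      Nat.choose_le_choose k (by omega)
    rw [hcard, hNn, Nat.cast_sub hle]
    have hn1 : (n:ℝ) - 1 ≠ 0 := sub_ne_zero.mpr (by exact_mod_cast (by omega : n ≠ 1))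
    field_simp
    linear_combination -key
  · intro p hp hsum
    by_contra hcon
    push_neg at hcon
    set V : ℝ := 1 - ((n : ℝ) - k) * ((n : ℝ) - k - 1) / ((n : ℝ) * ((n : ℝ) - 1)) with hV
    have hne : ((Finset.univ : Finset (Fin n)).offDiag).Nonempty := by
      refine ⟨(⟨0, by omega⟩, ⟨1, by omega⟩), ?_⟩
      simp [Finset.mem_offDiag, Fin.ext_iff]
    have hlt : ∑ q ∈ (Finset.univ : Finset (Fin n)).offDiag, V
        < ∑ q ∈ (Finset.univ : Finset (Fin n)).offDiag,
            ∑ S ∈ (Finset.univ : Finset (Fin n)).powersetCard k,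
              p S * (if q.1 ∈ S ∨ q.2 ∈ S then (1:ℝ) else 0) := by
      refine Finset.sum_lt_sum_of_nonempty hne ?_
      rintro ⟨u, v⟩ hq
      rw [Finset.mem_offDiag] at hq
      exact hcon u v hq.2.2
    have hrhs : ∑ q ∈ (Finset.univ : Finset (Fin n)).offDiag,
            ∑ S ∈ (Finset.univ : Finset (Fin n)).powersetCard k,
              p S * (if q.1 ∈ S ∨ q.2 ∈ S then (1:ℝ) else 0)
        = (n:ℝ)*((n:ℝ)-1) - ((n:ℝ)-k)*((n:ℝ)-k-1) := by
      rw [Finset.sum_comm]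
      have : ∀ S ∈ (Finset.univ : Finset (Fin n)).powersetCard k,
          ∑ q ∈ (Finset.univ : Finset (Fin n)).offDiag,
            p S * (if q.1 ∈ S ∨ q.2 ∈ S then (1:ℝ) else 0)
          = p S * ((n:ℝ)*((n:ℝ)-1) - ((n:ℝ)-k)*((n:ℝ)-k-1)) := by
        intro S hS
        rw [Finset.mem_powersetCard] at hS
        rw [← Finset.mul_sum, countS n k S hS.2 hk.le]
      rw [Finset.sum_congr rfl this, ← Finset.sum_mul, hsum, one_mul]
    have hlhs : ∑ q ∈ (Finset.univ : Finset (Fin n)).offDiag, V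
        = (n:ℝ)*((n:ℝ)-1) - ((n:ℝ)-k)*((n:ℝ)-k-1) := by
      rw [Finset.sum_const, Finset.offDiag_card, Finset.card_univ, Fintype.card_fin,
        nsmul_eq_mul]
      have c1 : ((n*n - n : ℕ) : ℝ) = (n:ℝ)*((n:ℝ)-1) := by
        rw [Nat.cast_sub (by nlinarith)]; push_cast; ring
      rw [c1, hV]
      have hn1 : (n:ℝ) - 1 ≠ 0 := sub_ne_zero.mpr (by exact_mod_cast (by omega : n ≠ 1))
      field_simp
      try ring
    rw [hlhs, hrhs] at hlt
    exact lt_irrefl _ hlt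
end
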